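/- Suppose h = P ∘ Q with h, P, Q ∈ A_n. Write the graded decompositions h = Σ_z h_z, P = Σ_α P_α, Q = Σ_β Q_β (finitely many nonzero components), and for each degree let h̃_z, p̃_α, q̃_β ∈ K[t_1,…,t_n] be the unique polynomials with h_z = h̃_z(θ)∘X^{e(z)}∘D^{w(z)}, P_α = p̃_α(θ)∘X^{e(α)}∘D^{w(α)}, Q_β = q̃_β(θ)∘X^{e(β)}∘D^{w(β)}. Then for every z ∈ ℤ^n the following identity holds in the commutative polynomial ring K[t_1,…,t_n]: h̃_z = Σ_{α+β=z} p̃_α · q̃_β^{[α]} · γ_{α,β}, where q̃_β^{[α]} denotes q̃_β with each variable t_i replaced by t_i + α_i. In particular, a factorization h = P∘Q in A_n corresponds to a solution of this finite commutative polynomial system. -/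

import Mathlib

open MvPolynomial

/-- Multiplication by the variable `x i`, as a `K`-linear endomorphism of
`K[x_1,…,x_n]`. -/
noncomputable def Xop (K : Type) [Field K] {n : ℕ} (i : Fin n) :
    Module.End K (MvPolynomial (Fin n) K) :=
  LinearMap.mulLeft K (X i)

/-- The `i`-th partial derivative, as a `K`-linear endomorphism of `K[x_1,…,x_n]`. -/
noncomputable def Dop (K : Type) [Field K] {n : ℕ} (i : Fin n) :
    Module.End K (MvPolynomial (Fin n) K) :=
  (pderiv i).toLinearMap

/-- `X^a := X_1^{a_1} ∘ ⋯ ∘ X_n^{a_n}`. -/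
noncomputable def Xpow (K : Type) [Field K] {n : ℕ} (a : Fin n → ℕ) :
    Module.End K (MvPolynomial (Fin n) K) :=
  (List.ofFn fun i => Xop K i ^ a i).prod

/-- `D^b := D_1^{b_1} ∘ ⋯ ∘ D_n^{b_n}`. -/
noncomputable def Dpow (K : Type) [Field K] {n : ℕ} (b : Fin n → ℕ) :
    Module.End K (MvPolynomial (Fin n) K) :=
  (List.ofFn fun i => Dop K i ^ b i).prod

/-- The `n`-th Weyl algebra `A_n`, realized as the `K`-subalgebra of
`End_K(K[x_1,…,x_n])` generated by `X_1,…,X_n, D_1,…,D_n`. -/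
noncomputable def WeylAlg (K : Type) [Field K] (n : ℕ) :
    Subalgebra K (Module.End K (MvPolynomial (Fin n) K)) :=
  Algebra.adjoin K (Set.range (Xop K (n := n)) ∪ Set.range (Dop K (n := n)))

/-- The `i`-th Euler operator `θ_i := X_i ∘ D_i`. -/
noncomputable def thetaOp (K : Type) [Field K] {n : ℕ} (i : Fin n) :
    Module.End K (MvPolynomial (Fin n) K) :=
  Xop K i * Dop K i

/-- Evaluation `f ↦ f(θ_1,…,θ_n)` of a polynomial `f ∈ K[t_1,…,t_n]` at the (pairwise
commuting) Euler operators. -/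
noncomputable def thetaEval (K : Type) [Field K] {n : ℕ}
    (f : MvPolynomial (Fin n) K) : Module.End K (MvPolynomial (Fin n) K) :=
  ∑ m ∈ f.support, f.coeff m • (List.ofFn fun i => thetaOp K i ^ m i).prod

/-- The `z`-th graded part `A_n^{(z)}`: the `K`-linear span of the operators
`X^a ∘ D^b` with `b − a = z` componentwise. -/
noncomputable def gradePart (K : Type) [Field K] {n : ℕ} (z : Fin n → ℤ) :
    Submodule K (Module.End K (MvPolynomial (Fin n) K)) :=
  Submodule.span K
    {F | ∃ a b : Fin n → ℕ, (∀ i, (b i : ℤ) - (a i : ℤ) = z i) ∧ F = Xpow K a * Dpow K b}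

/-- `e(z)_i := −z_i` if `z_i < 0`, and `0` otherwise. -/
def ez {n : ℕ} (z : Fin n → ℤ) : Fin n → ℕ := fun i => (-(z i)).toNat

/-- `w(z)_i := z_i` if `z_i > 0`, and `0` otherwise. -/
def wz {n : ℕ} (z : Fin n → ℤ) : Fin n → ℕ := fun i => (z i).toNat

/-- The polynomial `γ̃^{(κ)}_{a,b} ∈ K[t_1,…,t_n]` from the paper:
`1` if `a, b ≥ 0` or `a, b ≤ 0`;
`∏_{τ=0}^{|a|−1}(t_κ − τ)` if `a < 0 < b`, `|a| ≤ |b|`;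
`∏_{τ=0}^{|b|−1}(t_κ − τ − |a| + |b|)` if `a < 0 < b`, `|a| > |b|`;
`∏_{τ=1}^{a}(t_κ + τ)` if `b < 0 < a`, `|a| ≤ |b|`;
`∏_{τ=1}^{|b|}(t_κ + τ + |a| − |b|)` if `b < 0 < a`, `|a| > |b|`. -/
noncomputable def gammaT (K : Type) [Field K] {n : ℕ} (κ : Fin n) (a b : ℤ) :
    MvPolynomial (Fin n) K :=
  if (0 ≤ a ∧ 0 ≤ b) ∨ (a ≤ 0 ∧ b ≤ 0) then 1
  else if a < 0 ∧ 0 < b ∧ a.natAbs ≤ b.natAbs then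
    ∏ τ ∈ Finset.range a.natAbs, (X κ - (τ : MvPolynomial (Fin n) K))
  else if a < 0 ∧ 0 < b then
    ∏ τ ∈ Finset.range b.natAbs,
      (X κ - (τ : MvPolynomial (Fin n) K)
        - (a.natAbs : MvPolynomial (Fin n) K) + (b.natAbs : MvPolynomial (Fin n) K))
  else if 0 < a ∧ b < 0 ∧ a.natAbs ≤ b.natAbs then
    ∏ τ ∈ Finset.range a.natAbs, (X κ + ((τ : MvPolynomial (Fin n) K) + 1))
  else
    ∏ τ ∈ Finset.range b.natAbs,
      (X κ + ((τ : MvPolynomial (Fin n) K) + 1)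
        + (a.natAbs : MvPolynomial (Fin n) K) - (b.natAbs : MvPolynomial (Fin n) K))

/-- `γ_{α,β} := ∏_{κ=1}^{n} γ̃^{(κ)}_{α_κ,β_κ}`. -/
noncomputable def gammaPoly (K : Type) [Field K] {n : ℕ} (α β : Fin n → ℤ) :
    MvPolynomial (Fin n) K :=
  ∏ κ : Fin n, gammaT K κ (α κ) (β κ)

/-- `g^{[α]}`: the polynomial `g` with each variable `t_i` replaced by `t_i + α_i`. -/
noncomputable def shiftPoly (K : Type) [Field K] {n : ℕ} (α : Fin n → ℤ)
    (g : MvPolynomial (Fin n) K) : MvPolynomial (Fin n) K :=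
  MvPolynomial.aeval (fun i => X i + MvPolynomial.C ((α i : K))) g

/-!
Write `x^{(k)} = x (x - 1) ⋯ (x - k + 1)` for the falling factorial. The operator
`f(θ) ∘ X^{e(z)} ∘ D^{w(z)}` sends the monomial `x^m` to `c · x^{m-z}` with
`c = f(m - z) · ∏_i m_i^{(w(z)_i)}`, and `c = 0` whenever `m - z` leaves `ℕ^n`. Composing the
pieces of degrees `α` and `β` multiplies two such scalars, and comparing the product with the
scalar of the degree-`(α + β)` piece reduces, coordinate by coordinate, to the polynomial identity
`x^{(b⁺)} · (x - b)^{(a⁺)} = γ̃_{a,b}(x - a - b) · x^{((a+b)⁺)}`, which is what `γ̃` is built for.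
So the normal-form map `(f_z)_z ↦ Σ_z f_z(θ) X^{e(z)} D^{w(z)}` turns the convolution on the
right-hand side into composition. It is injective: on `x^m` with `m ≥ w(z)` the coefficient of
`x^{m-z}` isolates the degree-`z` scalar, and in characteristic zero a polynomial vanishing on a
translated orthant of `ℕ^n` is zero.
-/

theorem descPochhammer_eval_add {R : Type*} [CommRing R] (x : R) (k l : ℕ) :
    (descPochhammer R (k + l)).eval x
      = (descPochhammer R k).eval x * (descPochhammer R l).eval (x - k) := by
  rw [← descPochhammer_mul, Polynomial.eval_mul, Polynomial.eval_comp, Polynomial.eval_sub,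
    Polynomial.eval_X, Polynomial.eval_natCast]

theorem prod_range_add_succ_eq_descPochhammer_eval {R : Type*} [CommRing R] (y : R) (k : ℕ) :
    ∏ τ ∈ Finset.range k, (y + ((τ : R) + 1)) = (descPochhammer R k).eval (y + k) := by
  rw [descPochhammer_eval_eq_prod_range, ← Finset.prod_range_reflect]
  refine Finset.prod_congr rfl fun τ hτ => ?_
  rw [Finset.mem_range] at hτ
  rw [Nat.cast_sub (by omega), Nat.cast_sub (by omega)]
  push_cast
  ring

theorem descPochhammer_eval_mul_eval_gammaT_of_neg_of_pos {K : Type} [Field K] {n : ℕ}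
    (κ : Fin n) {a b : ℤ} (ha : a < 0) (hb : 0 < b) (x : K) (v : Fin n → K)
    (hv : v κ = x - a - b) :
    (descPochhammer K b.toNat).eval x * (descPochhammer K a.toNat).eval (x - b)
      = eval v (gammaT K κ a b) * (descPochhammer K (a + b).toNat).eval x := by
  rw [gammaT, if_neg (by omega)]
  by_cases hle : a.natAbs ≤ b.natAbs
  · rw [if_pos ⟨ha, hb, hle⟩]
    obtain ⟨p, d, rfl, rfl⟩ : ∃ p d : ℕ, a = -p ∧ b = ((d + p : ℕ) : ℤ) :=
      ⟨a.natAbs, b.natAbs - a.natAbs, by omega, by omega⟩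
    simp only [show (-(p : ℤ)).toNat = 0 by omega, Int.toNat_natCast, Int.natAbs_neg,
      Int.natAbs_natCast, show (-(p : ℤ) + ((d + p : ℕ) : ℤ)).toNat = d by omega,
      descPochhammer_zero, Polynomial.eval_one, mul_one, map_prod]
    rw [Finset.prod_congr rfl fun (τ : ℕ) _ => show eval v (X κ - (τ : MvPolynomial (Fin n) K))
        = x - d - τ by simp only [map_sub, eval_X, map_natCast, hv]; push_cast; ring,
      ← descPochhammer_eval_eq_prod_range, mul_comm, ← descPochhammer_eval_add, add_comm]
  · rw [if_neg fun h => hle h.2.2, if_pos ⟨ha, hb⟩]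
    obtain ⟨q, d, rfl, rfl⟩ : ∃ q d : ℕ, a = -((q + d : ℕ) : ℤ) ∧ b = q :=
      ⟨b.natAbs, a.natAbs - b.natAbs, by omega, by omega⟩
    simp only [show (-((q + d : ℕ) : ℤ)).toNat = 0 by omega, Int.toNat_natCast, Int.natAbs_neg,
      Int.natAbs_natCast, show (-((q + d : ℕ) : ℤ) + q).toNat = 0 by omega,
      descPochhammer_zero, Polynomial.eval_one, mul_one, map_prod]
    rw [Finset.prod_congr rfl fun (τ : ℕ) _ => show eval v (X κ - (τ : MvPolynomial (Fin n) K)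
        - ((q + d : ℕ) : MvPolynomial (Fin n) K) + (q : MvPolynomial (Fin n) K)) = x - τ by
          simp only [map_add, map_sub, eval_X, map_natCast, hv]; push_cast; ring,
      ← descPochhammer_eval_eq_prod_range]

theorem descPochhammer_eval_mul_eval_gammaT_of_pos_of_neg {K : Type} [Field K] {n : ℕ}
    (κ : Fin n) {a b : ℤ} (ha : 0 < a) (hb : b < 0) (x : K) (v : Fin n → K)
    (hv : v κ = x - a - b) :
    (descPochhammer K b.toNat).eval x * (descPochhammer K a.toNat).eval (x - b)
      = eval v (gammaT K κ a b) * (descPochhammer K (a + b).toNat).eval x := by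
  rw [gammaT, if_neg (by omega), if_neg (by omega), if_neg (by omega)]
  by_cases hle : a.natAbs ≤ b.natAbs
  · rw [if_pos ⟨ha, hb, hle⟩]
    obtain ⟨p, d, rfl, rfl⟩ : ∃ p d : ℕ, a = p ∧ b = -((p + d : ℕ) : ℤ) :=
      ⟨a.natAbs, b.natAbs - a.natAbs, by omega, by omega⟩
    simp only [show (-((p + d : ℕ) : ℤ)).toNat = 0 by omega, Int.toNat_natCast,
      Int.natAbs_natCast, show ((p : ℤ) + -((p + d : ℕ) : ℤ)).toNat = 0 by omega,
      descPochhammer_zero, Polynomial.eval_one, mul_one, one_mul, map_prod]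
    rw [Finset.prod_congr rfl fun (τ : ℕ) _ =>
        show eval v (X κ + ((τ : MvPolynomial (Fin n) K) + 1)) = x + d + ((τ : K) + 1) by
          simp only [map_add, eval_X, map_natCast, map_one, hv]; push_cast; ring,
      prod_range_add_succ_eq_descPochhammer_eval]
    congr 1
    push_cast
    ring
  · rw [if_neg fun h => hle h.2.2]
    obtain ⟨q, d, rfl, rfl⟩ : ∃ q d : ℕ, a = ((q + d : ℕ) : ℤ) ∧ b = -(q : ℤ) :=
      ⟨b.natAbs, a.natAbs - b.natAbs, by omega, by omega⟩
    simp only [show (-(q : ℤ)).toNat = 0 by omega, Int.toNat_natCast, Int.natAbs_neg,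
      Int.natAbs_natCast, show (((q + d : ℕ) : ℤ) + -(q : ℤ)).toNat = d by omega,
      descPochhammer_zero, Polynomial.eval_one, one_mul, map_prod]
    rw [Finset.prod_congr rfl fun (τ : ℕ) _ => show eval v (X κ + ((τ : MvPolynomial (Fin n) K) + 1)
        + ((q + d : ℕ) : MvPolynomial (Fin n) K) - (q : MvPolynomial (Fin n) K))
          = x + ((τ : K) + 1) by
          simp only [map_add, map_sub, eval_X, map_natCast, map_one, hv]; push_cast; ring,
      prod_range_add_succ_eq_descPochhammer_eval, descPochhammer_eval_add]
    congr 2 <;> push_cast <;> ring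

theorem descPochhammer_eval_mul_eval_gammaT {K : Type} [Field K] {n : ℕ} (κ : Fin n) (a b : ℤ)
    (x : K) (v : Fin n → K) (hv : v κ = x - a - b) :
    (descPochhammer K b.toNat).eval x * (descPochhammer K a.toNat).eval (x - b)
      = eval v (gammaT K κ a b) * (descPochhammer K (a + b).toNat).eval x := by
  rcases le_or_gt 0 a with ha | ha <;> rcases le_or_gt 0 b with hb | hb
  · lift a to ℕ using ha
    lift b to ℕ using hb
    rw [gammaT, if_pos (.inl ⟨a.cast_nonneg, b.cast_nonneg⟩), map_one, one_mul, ← Nat.cast_add,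
      Int.toNat_natCast, Int.toNat_natCast, Int.toNat_natCast, add_comm a b,
      descPochhammer_eval_add, Int.cast_natCast]
  · rcases ha.eq_or_lt with rfl | ha
    · rw [gammaT, if_pos (.inr ⟨le_rfl, hb.le⟩)]
      simp [Int.toNat_of_nonpos hb.le]
    · exact descPochhammer_eval_mul_eval_gammaT_of_pos_of_neg κ ha hb x v hv
  · rcases hb.eq_or_lt with rfl | hb
    · rw [gammaT, if_pos (.inr ⟨ha.le, le_rfl⟩)]
      simp [Int.toNat_of_nonpos ha.le]
    · exact descPochhammer_eval_mul_eval_gammaT_of_neg_of_pos κ ha hb x v hv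
  · rw [gammaT, if_pos (.inr ⟨ha.le, hb.le⟩)]
    simp [Int.toNat_of_nonpos ha.le, Int.toNat_of_nonpos hb.le,
      Int.toNat_of_nonpos (add_nonpos ha.le hb.le)]

theorem MvPolynomial.eq_zero_of_eval_natCast_sub_eq_zero {R σ : Type*} [CommRing R] [IsDomain R]
    [CharZero R] {f : MvPolynomial σ R} (N : σ → ℕ) (c : σ → R)
    (h : ∀ m : σ → ℕ, N ≤ m → eval (fun i => (m i : R) - c i) f = 0) : f = 0 := by
  refine funext_set (fun i => (fun k : ℕ => (k : R) - c i) '' Set.Ici (N i))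
    (fun i => (Set.Ici_infinite _).image fun k _ l _ hkl => by simpa using hkl) fun x hx => ?_
  choose m hmN hmx using fun i => hx i (Set.mem_univ i)
  rw [show x = fun i => (m i : R) - c i from _root_.funext fun i => (hmx i).symm, h m hmN, map_zero]

section Monomials

variable (K : Type) [Field K] {n : ℕ}

noncomputable def monomialFun (m : Fin n → ℕ) : MvPolynomial (Fin n) K :=
  monomial (Finsupp.equivFunOnFinite.symm m) 1

theorem Xpow_eq_mulLeft (a : Fin n → ℕ) :
    Xpow K a = LinearMap.mulLeft K (monomialFun K a) := by
  have hX : (List.ofFn fun i => Xop K i ^ a i)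
      = (List.ofFn fun i => X i ^ a i).map (Algebra.lmul K (MvPolynomial (Fin n) K)) := by
    simp only [List.map_ofFn, Function.comp_def, map_pow]
    rfl
  rw [Xpow, hX, ← map_list_prod, List.prod_ofFn, monomialFun, monomial_eq, C_1, one_mul,
    Finsupp.prod_fintype _ _ (fun i => pow_zero _)]
  rfl

theorem Xpow_apply_monomialFun (a m : Fin n → ℕ) :
    Xpow K a (monomialFun K m) = monomialFun K (m + a) := by
  rw [Xpow_eq_mulLeft, LinearMap.mulLeft_apply, monomialFun, monomialFun, monomial_mul, one_mul,
    add_comm, monomialFun]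
  congr 2
  ext; simp

theorem Dop_pow_apply_monomialFun (i : Fin n) (k : ℕ) (m : Fin n → ℕ) :
    (Dop K i ^ k) (monomialFun K m)
      = ((m i).descFactorial k : K) • monomialFun K (m - Pi.single i k) := by
  induction k with
  | zero => simp
  | succ k ih =>
    rw [pow_succ', Module.End.mul_apply, ih, map_smul, Dop, Derivation.coeFn_coe,
      monomialFun, pderiv_monomial, smul_monomial, monomialFun, smul_monomial]
    congr 1
    · congr 1
      ext j
      by_cases hj : j = i
      · subst hj; simp; omega
      · simp [hj]
    · simp [Nat.descFactorial_succ, mul_comm]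

theorem list_prod_Dop_pow_apply_monomialFun (l : List (Fin n)) (hl : l.Nodup)
    (b m : Fin n → ℕ) :
    (l.map fun i => Dop K i ^ b i).prod (monomialFun K m)
      = (l.map fun i => ((m i).descFactorial (b i) : K)).prod
          • monomialFun K (fun j => if j ∈ l then m j - b j else m j) := by
  induction l with
  | nil => simp
  | cons i l ih =>
    rw [List.nodup_cons] at hl
    rw [List.map_cons, List.prod_cons, Module.End.mul_apply, ih hl.2, map_smul,
      Dop_pow_apply_monomialFun, smul_smul, if_neg hl.1, List.map_cons, List.prod_cons, mul_comm]
    congr 2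
    funext j
    by_cases hj : j = i
    · subst hj; simp [hl.1]
    · by_cases hjl : j ∈ l <;> simp [hj, hjl]

theorem Dpow_apply_monomialFun (b m : Fin n → ℕ) :
    Dpow K b (monomialFun K m)
      = (∏ i, ((m i).descFactorial (b i) : K)) • monomialFun K (m - b) := by
  rw [Dpow, List.ofFn_eq_map, list_prod_Dop_pow_apply_monomialFun K _ (List.nodup_finRange n),
    Fin.prod_univ_def]
  simp only [List.mem_finRange, if_true]
  rfl

theorem Xop_apply_monomialFun (i : Fin n) (m : Fin n → ℕ) :
    Xop K i (monomialFun K m) = monomialFun K (m + Pi.single i 1) := by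
  rw [Xop, LinearMap.mulLeft_apply, X, monomialFun, monomialFun, monomial_mul, one_mul, add_comm]
  congr 2
  ext j
  by_cases hj : j = i
  · subst hj; simp
  · simp [hj]

theorem thetaOp_apply_monomialFun (i : Fin n) (m : Fin n → ℕ) :
    thetaOp K i (monomialFun K m) = (m i : K) • monomialFun K m := by
  rw [thetaOp, Module.End.mul_apply, ← pow_one (Dop K i), Dop_pow_apply_monomialFun, map_smul,
    Xop_apply_monomialFun, Nat.descFactorial_one]
  rcases Nat.eq_zero_or_pos (m i) with h | h
  · simp [h]
  · congr 2
    funext j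
    by_cases hj : j = i
    · subst hj; simp; omega
    · simp [hj]

theorem list_prod_thetaOp_pow_apply_monomialFun (l : List (Fin n)) (d m : Fin n → ℕ) :
    (l.map fun i => thetaOp K i ^ d i).prod (monomialFun K m)
      = (l.map fun i => (m i : K) ^ d i).prod • monomialFun K m := by
  have hpow : ∀ i k, (thetaOp K i ^ k) (monomialFun K m) = (m i : K) ^ k • monomialFun K m :=
    fun i k => by
      induction k with
      | zero => simp
      | succ k ih =>
        rw [pow_succ, Module.End.mul_apply, thetaOp_apply_monomialFun, map_smul, ih, smul_smul,
          pow_succ']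
  induction l with
  | nil => simp
  | cons i l ih =>
    rw [List.map_cons, List.prod_cons, Module.End.mul_apply, ih, map_smul, hpow, smul_smul,
      List.map_cons, List.prod_cons, mul_comm]

theorem thetaEval_apply_monomialFun (f : MvPolynomial (Fin n) K) (m : Fin n → ℕ) :
    thetaEval K f (monomialFun K m) = eval (fun i => (m i : K)) f • monomialFun K m := by
  rw [thetaEval, eval_eq', LinearMap.sum_apply, Finset.sum_smul]
  refine Finset.sum_congr rfl fun d _ => ?_
  rw [LinearMap.smul_apply, List.ofFn_eq_map, list_prod_thetaOp_pow_apply_monomialFun, smul_smul,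
    ← Fin.prod_univ_def]

end Monomials

section Graded

variable (K : Type) [Field K] {n : ℕ}

noncomputable def gradedOp (z : Fin n → ℤ) :
    MvPolynomial (Fin n) K →ₗ[K] Module.End K (MvPolynomial (Fin n) K) :=
  LinearMap.mulRight K (Xpow K (ez z) * Dpow K (wz z)) ∘ₗ
    Finsupp.linearCombination K
      (fun d : Fin n →₀ ℕ => (List.ofFn fun i => thetaOp K i ^ d i).prod) ∘ₗ
    (AddMonoidAlgebra.coeffLinearEquiv K).toLinearMap

theorem gradedOp_apply (z : Fin n → ℤ) (f : MvPolynomial (Fin n) K) :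
    gradedOp K z f = thetaEval K f * (Xpow K (ez z) * Dpow K (wz z)) :=
  rfl

noncomputable def gradedCoeff (z : Fin n → ℤ) (f : MvPolynomial (Fin n) K) (x : Fin n → K) : K :=
  eval (fun i => x i - z i) f * ∏ i, (descPochhammer K (wz z i)).eval (x i)

variable {K}

theorem gradedCoeff_natCast_eq_zero {z : Fin n → ℤ} {m : Fin n → ℕ} {i : Fin n}
    (hi : m i < wz z i) (f : MvPolynomial (Fin n) K) :
    gradedCoeff K z f (fun i => (m i : K)) = 0 := by
  rw [gradedCoeff, Finset.prod_eq_zero (Finset.mem_univ i) (descPochhammer_eval_coe_nat_of_lt hi),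
    mul_zero]

theorem le_of_gradedCoeff_natCast_ne_zero {z : Fin n → ℤ} {f : MvPolynomial (Fin n) K}
    {m : Fin n → ℕ} (h : gradedCoeff K z f (fun i => (m i : K)) ≠ 0) (i : Fin n) :
    wz z i ≤ m i :=
  not_lt.mp fun hi => h (gradedCoeff_natCast_eq_zero hi f)

theorem natCast_sub_wz_add_ez {z : Fin n → ℤ} {m : Fin n → ℕ} (hm : ∀ i, wz z i ≤ m i) :
    (fun i => (((m - wz z + ez z) i : ℕ) : K)) = fun i => (m i : K) - z i := by
  funext i
  have := hm i
  simp only [Pi.add_apply, Pi.sub_apply, wz, ez] at this ⊢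
  rw [← Int.cast_natCast, ← Int.cast_natCast (m i), ← Int.cast_sub]
  congr 1
  omega

variable (K)

theorem gradedOp_apply_monomialFun (z : Fin n → ℤ) (f : MvPolynomial (Fin n) K) (m : Fin n → ℕ) :
    gradedOp K z f (monomialFun K m)
      = gradedCoeff K z f (fun i => (m i : K)) • monomialFun K (m - wz z + ez z) := by
  rw [gradedOp_apply, Module.End.mul_apply, Module.End.mul_apply, Dpow_apply_monomialFun, map_smul,
    Xpow_apply_monomialFun, map_smul, thetaEval_apply_monomialFun, smul_smul]
  by_cases hm : ∀ i, wz z i ≤ m i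
  · simp only [gradedCoeff, natCast_sub_wz_add_ez hm, descPochhammer_eval_eq_descFactorial,
      mul_comm]
  · push Not at hm
    obtain ⟨i, hi⟩ := hm
    rw [gradedCoeff_natCast_eq_zero hi, Finset.prod_eq_zero (Finset.mem_univ i)
      (by rw [Nat.descFactorial_eq_zero_iff_lt.mpr hi, Nat.cast_zero]), zero_mul]

theorem eval_shiftPoly (v : Fin n → K) (α : Fin n → ℤ) (g : MvPolynomial (Fin n) K) :
    eval v (shiftPoly K α g) = eval (fun i => v i + α i) g := by
  change aeval v (aeval (fun i => X i + C ((α i : K))) g) = _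
  rw [comp_aeval_apply]
  simp

theorem gradedCoeff_mul (α β : Fin n → ℤ) (p q : MvPolynomial (Fin n) K) (x : Fin n → K) :
    gradedCoeff K β q x * gradedCoeff K α p (fun i => x i - β i)
      = gradedCoeff K (α + β) (p * shiftPoly K α q * gammaPoly K α β) x := by
  set y : Fin n → K := fun i => x i - ((α + β) i : ℤ)
  have hq : eval (fun i => x i - ((α + β) i : ℤ) + α i) q = eval (fun i => x i - β i) q := by
    congr 2; funext i; simp only [Pi.add_apply]; push_cast; ring
  have hp : eval (fun i => x i - β i - α i) p = eval y p := by
    congr 2; funext i; simp only [y, Pi.add_apply]; push_cast; ring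
  have hfall : (∏ i, (descPochhammer K (wz β i)).eval (x i))
        * ∏ i, (descPochhammer K (wz α i)).eval (x i - β i)
      = eval y (gammaPoly K α β) * ∏ i, (descPochhammer K (wz (α + β) i)).eval (x i) := by
    rw [gammaPoly, map_prod, ← Finset.prod_mul_distrib, ← Finset.prod_mul_distrib]
    exact Finset.prod_congr rfl fun κ _ => descPochhammer_eval_mul_eval_gammaT κ _ _ _ y
      (by simp only [y, Pi.add_apply]; push_cast; ring)
  simp only [gradedCoeff, map_mul, eval_shiftPoly, hq, hp]
  linear_combination eval y p * eval (fun i => x i - β i) q * hfall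

theorem gradedOp_mul (α β : Fin n → ℤ) (p q : MvPolynomial (Fin n) K) :
    gradedOp K α p * gradedOp K β q
      = gradedOp K (α + β) (p * shiftPoly K α q * gammaPoly K α β) := by
  refine (basisMonomials (Fin n) K).ext fun d => ?_
  obtain ⟨m, rfl⟩ := Finsupp.equivFunOnFinite.symm.surjective d
  rw [show basisMonomials (Fin n) K (Finsupp.equivFunOnFinite.symm m) = monomialFun K m by
      rw [coe_basisMonomials]; rfl,
    Module.End.mul_apply, gradedOp_apply_monomialFun, map_smul, gradedOp_apply_monomialFun,
    gradedOp_apply_monomialFun, smul_smul]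
  have hcoeff : gradedCoeff K β q (fun i => (m i : K))
        * gradedCoeff K α p (fun i => (((m - wz β + ez β) i : ℕ) : K))
      = gradedCoeff K (α + β) (p * shiftPoly K α q * gammaPoly K α β) (fun i => (m i : K)) := by
    rw [← gradedCoeff_mul]
    by_cases hm : ∀ i, wz β i ≤ m i
    · rw [natCast_sub_wz_add_ez hm]
    · push Not at hm
      obtain ⟨i, hi⟩ := hm
      rw [gradedCoeff_natCast_eq_zero hi, zero_mul, zero_mul]
  rw [hcoeff]
  by_cases h0 : gradedCoeff K (α + β) (p * shiftPoly K α q * gammaPoly K α β)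
      (fun i => (m i : K)) = 0
  · rw [h0, zero_smul, zero_smul]
  rw [← hcoeff] at h0
  have hβ := le_of_gradedCoeff_natCast_ne_zero (left_ne_zero_of_mul h0)
  have hα := le_of_gradedCoeff_natCast_ne_zero (right_ne_zero_of_mul h0)
  congr 2
  funext i
  have := hβ i
  have := hα i
  simp only [Pi.add_apply, Pi.sub_apply, wz, ez] at *
  omega

end Graded

section NormalForm

variable (K : Type) [Field K] {n : ℕ}

theorem coeff_monomialFun (e m : Fin n → ℕ) :
    coeff (Finsupp.equivFunOnFinite.symm e) (monomialFun K m) = if m = e then 1 else 0 := by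
  rw [monomialFun, coeff_monomial]
  exact if_congr Finsupp.equivFunOnFinite.symm.injective.eq_iff rfl rfl

noncomputable def normalFormOp :
    ((Fin n → ℤ) →₀ MvPolynomial (Fin n) K) →ₗ[K] Module.End K (MvPolynomial (Fin n) K) :=
  Finsupp.lsum K (gradedOp K)

theorem normalFormOp_apply (c : (Fin n → ℤ) →₀ MvPolynomial (Fin n) K) :
    normalFormOp K c = c.sum fun z f => thetaEval K f * (Xpow K (ez z) * Dpow K (wz z)) :=
  rfl

theorem coeff_normalFormOp_apply_monomialFun (c : (Fin n → ℤ) →₀ MvPolynomial (Fin n) K)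
    {z : Fin n → ℤ} {m : Fin n → ℕ} (hm : ∀ i, wz z i ≤ m i) :
    coeff (Finsupp.equivFunOnFinite.symm (m - wz z + ez z)) (normalFormOp K c (monomialFun K m))
      = gradedCoeff K z (c z) (fun i => (m i : K)) := by
  rw [normalFormOp, Finsupp.lsum_apply, Finsupp.sum, LinearMap.sum_apply, coeff_sum,
    Finset.sum_eq_single z]
  · rw [gradedOp_apply_monomialFun, coeff_smul, coeff_monomialFun, if_pos rfl, smul_eq_mul,
      mul_one]
  · intro z' _ hz'
    rw [gradedOp_apply_monomialFun, coeff_smul, coeff_monomialFun, smul_eq_mul]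
    by_cases hm' : ∀ i, wz z' i ≤ m i
    · refine mul_eq_zero_of_right _ (if_neg fun he => hz' (funext fun i => ?_))
      have := congrFun he i
      have := hm i
      have := hm' i
      simp only [Pi.add_apply, Pi.sub_apply, wz, ez] at *
      omega
    · push Not at hm'
      obtain ⟨i, hi⟩ := hm'
      rw [gradedCoeff_natCast_eq_zero hi, zero_mul]
  · intro hz
    rw [Finsupp.notMem_support_iff.mp hz, map_zero, LinearMap.zero_apply, coeff_zero]

theorem normalFormOp_injective [CharZero K] :
    Function.Injective (normalFormOp K (n := n)) := by
  refine (injective_iff_map_eq_zero _).mpr fun c hc => Finsupp.ext fun z => ?_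
  refine eq_zero_of_eval_natCast_sub_eq_zero (wz z) (fun i => (z i : K)) fun m hm => ?_
  have h := coeff_normalFormOp_apply_monomialFun K c hm
  rw [hc, LinearMap.zero_apply, coeff_zero, gradedCoeff] at h
  refine (mul_eq_zero.mp h.symm).resolve_right (Finset.prod_ne_zero_iff.mpr fun i _ => ?_)
  rw [descPochhammer_eval_eq_descFactorial, Nat.cast_ne_zero, Ne, Nat.descFactorial_eq_zero_iff_lt,
    not_lt]
  exact hm i

noncomputable def symbolMul (c d : (Fin n → ℤ) →₀ MvPolynomial (Fin n) K) :
    (Fin n → ℤ) →₀ MvPolynomial (Fin n) K :=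
  c.sum fun α p => d.sum fun β q =>
    Finsupp.single (α + β) (p * shiftPoly K α q * gammaPoly K α β)

theorem normalFormOp_mul (c d : (Fin n → ℤ) →₀ MvPolynomial (Fin n) K) :
    normalFormOp K c * normalFormOp K d = normalFormOp K (symbolMul K c d) := by
  rw [symbolMul, map_finsuppSum, normalFormOp, Finsupp.lsum_apply, Finsupp.sum_mul]
  refine Finsupp.sum_congr fun α _ => ?_
  rw [map_finsuppSum, Finsupp.lsum_apply, Finsupp.mul_sum]
  exact Finsupp.sum_congr fun β _ => by rw [Finsupp.lsum_single, gradedOp_mul]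

theorem symbolMul_apply (c d : (Fin n → ℤ) →₀ MvPolynomial (Fin n) K) (z : Fin n → ℤ) :
    symbolMul K c d z
      = ∑ α ∈ c.support, c α * shiftPoly K α (d (z - α)) * gammaPoly K α (z - α) := by
  rw [symbolMul, Finsupp.sum_apply, Finsupp.sum]
  refine Finset.sum_congr rfl fun α _ => ?_
  rw [Finsupp.sum_apply, Finsupp.sum, Finset.sum_eq_single (z - α)]
  · rw [add_sub_cancel, Finsupp.single_eq_same]
  · intro β _ hβ
    exact Finsupp.single_eq_of_ne (by rintro rfl; exact hβ (by abel))
  · intro hz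
    rw [Finsupp.notMem_support_iff.mp hz, shiftPoly, map_zero, mul_zero, zero_mul,
      Finsupp.single_zero, Finsupp.zero_apply]

end NormalForm

theorem factorization_commutative_system_general (K : Type) [Field K] [CharZero K]
    (n : ℕ)
    (P Q : Module.End K (MvPolynomial (Fin n) K))
    (ch pc qc : (Fin n → ℤ) →₀ MvPolynomial (Fin n) K)
    (hHdec : P * Q =
      ch.sum fun z f => thetaEval K f * (Xpow K (ez z) * Dpow K (wz z)))
    (hPdec : P =
      pc.sum fun z f => thetaEval K f * (Xpow K (ez z) * Dpow K (wz z)))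
    (hQdec : Q =
      qc.sum fun z f => thetaEval K f * (Xpow K (ez z) * Dpow K (wz z))) :
    ∀ z : Fin n → ℤ,
      ch z = ∑ α ∈ pc.support,
        pc α * shiftPoly K α (qc (z - α)) * gammaPoly K α (z - α) := by
  rw [← normalFormOp_apply] at hHdec hPdec hQdec
  have hch : ch = symbolMul K pc qc :=
    normalFormOp_injective K (by rw [← normalFormOp_mul, ← hPdec, ← hQdec, hHdec])
  exact fun z => hch ▸ symbolMul_apply K pc qc z

/-- Suppose `h = P ∘ Q` in `A_n`, with graded decompositions encoded
by the θ-rewritings `ch, pc, qc : ℤ^n →₀ K[t_1,…,t_n]` (so e.g.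
`h = Σ_z h̃_z(θ) ∘ X^{e(z)} ∘ D^{w(z)}` with `h̃_z = ch z`).  Then for every `z ∈ ℤ^n`
the identity `h̃_z = Σ_{α+β=z} p̃_α · q̃_β^{[α]} · γ_{α,β}` holds in the commutative
polynomial ring `K[t_1,…,t_n]`. -/
theorem factorization_commutative_system (K : Type) [Field K] [CharZero K]
    (n : ℕ) (hn : 0 < n)
    (P Q : Module.End K (MvPolynomial (Fin n) K))
    (ch pc qc : (Fin n → ℤ) →₀ MvPolynomial (Fin n) K)
    (hHdec : P * Q =
      ch.sum fun z f => thetaEval K f * (Xpow K (ez z) * Dpow K (wz z)))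
    (hPdec : P =
      pc.sum fun z f => thetaEval K f * (Xpow K (ez z) * Dpow K (wz z)))
    (hQdec : Q =
      qc.sum fun z f => thetaEval K f * (Xpow K (ez z) * Dpow K (wz z))) :
    ∀ z : Fin n → ℤ,
      ch z = ∑ α ∈ pc.support,
        pc α * shiftPoly K α (qc (z - α)) * gammaPoly K α (z - α) :=
  factorization_commutative_system_general K n P Q ch pc qc hHdec hPdec hQdec
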